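/- arXiv:2112.02064 — 2 statements merged into one kernel-verified Lean document; each statement's English description precedes it below -/
import Mathlib

section
/- Let 0 < q < 1 and let k ≥ 1, N ≥ 1, α ≥ 0 be integers. Then (q^{k(2-2N-α)} / (N·(1-q²)^k·(1-q^{2k}))) · ∑_{l=0}^{k-1} (-1)^l·q^{l(l+1)}·(q^{2N-2l};q²)_k·(q^{2N+2α-2l};q²)_k / ((q²;q²)_l·(q²;q²)_{k-l-1}) = M_α(k,N). (The left-hand side is the k-th moment of the discrete q-Laguerre ensemble obtained from the Schur-function expansion of power sums over hook partitions; the right-hand side is its terminating ₃φ₂ representation.) -/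
/-- The q-Pochhammer symbol `(a;c)_n = ∏_{i=0}^{n-1} (1 - a c^i)`. -/
noncomputable def qPoch (a c : ℝ) (n : ℕ) : ℝ := ∏ i ∈ Finset.range n, (1 - a * c ^ i)

/-- The k-th moment `M_α(k,N)` of the normalised one-point function of the discrete
q-Laguerre ensemble with `N` particles and parameter `α` (terminating ₃φ₂ representation). -/
noncomputable def Mlag (q : ℝ) (α k N : ℕ) : ℝ :=
  (q ^ ((k : ℤ) * (2 - 2 * (N : ℤ) - (α : ℤ))) / ((N : ℝ) * (1 - q ^ 2) ^ k)) *
    (qPoch (q ^ (2 * N)) (q ^ 2) k * qPoch (q ^ (2 * N + 2 * α)) (q ^ 2) k /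
      qPoch (q ^ 2) (q ^ 2) k) *
    ∑ l ∈ Finset.range k,
      q ^ (-(2 * (k : ℤ) * (l : ℤ))) * qPoch (q ^ (2 - 2 * (k : ℤ))) (q ^ 2) l *
          qPoch (q ^ (2 - 2 * (N : ℤ))) (q ^ 2) l *
          qPoch (q ^ (2 - 2 * (N : ℤ) - 2 * (α : ℤ))) (q ^ 2) l /
        (qPoch (q ^ 2) (q ^ 2) l * qPoch (q ^ (2 - 2 * (N : ℤ) - 2 * (k : ℤ))) (q ^ 2) l *
          qPoch (q ^ (2 - 2 * (N : ℤ) - 2 * (α : ℤ) - 2 * (k : ℤ))) (q ^ 2) l)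

/-! The two sums agree term by term. Splitting `(a;c)_{m+n} = (a;c)_m (a c^m;c)_n` and the
reflection `(a;c)_n = (-a)^n c^(n choose 2) (c^(1-n)/a;c)_n`, with `c = q²`, give
`(q^(2M-2l);q²)_k = (q^(2M);q²)_k (q^(2-2M);q²)_l / ((q^(2-2M-2k);q²)_l q^(2kl))` for
`M = N, N + α`, and
`(-1)^l q^(l(l+1)) / (q²;q²)_(k-l-1) = q^(2kl) (q^(2-2k);q²)_l / (q²;q²)_(k-1)`;
the factor `1 - q^(2k)` completes `(q²;q²)_(k-1)` to `(q²;q²)_k`. -/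

theorem qPoch_add (a c : ℝ) (m n : ℕ) :
    qPoch a c (m + n) = qPoch a c m * qPoch (a * c ^ m) c n := by
  simp only [qPoch, Finset.prod_range_add, pow_add, mul_assoc]

theorem qPoch_reflect {a b c : ℝ} (hc : c ≠ 0) {n : ℕ} (habc : a * b * c ^ n = c) :
    qPoch a c n = (-a) ^ n * c ^ n.choose 2 * qPoch b c n := by
  have hfactor : ∀ i ∈ Finset.range n,
      1 - a * c ^ i = -a * c ^ i * (1 - b * c ^ (n - 1 - i)) := by
    intro i hi
    have hpow : c ^ i * c ^ (n - 1 - i) * c = c ^ n := by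
      rw [← pow_add, ← pow_succ]
      congr 1
      have := Finset.mem_range.mp hi
      omega
    have hone : a * b * (c ^ i * c ^ (n - 1 - i)) = 1 :=
      mul_right_cancel₀ hc (by rw [one_mul, mul_assoc, hpow, habc])
    linear_combination -hone
  rw [qPoch, Finset.prod_congr rfl hfactor, Finset.prod_mul_distrib, Finset.prod_mul_distrib,
    Finset.prod_const, Finset.card_range, Finset.prod_pow_eq_pow_sum, Finset.sum_range_id,
    ← Nat.choose_two_right, qPoch, ← Finset.prod_range_reflect (fun i => 1 - b * c ^ i)]

theorem qPoch_ne_zero {a c : ℝ} {n : ℕ} (h : ∀ i < n, a * c ^ i ≠ 1) : qPoch a c n ≠ 0 :=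
  Finset.prod_ne_zero_iff.mpr fun i hi => sub_ne_zero.mpr (h i (Finset.mem_range.mp hi)).symm

section

variable {q : ℝ}

theorem zpow_mul_sq_pow (hq : q ≠ 0) (a : ℤ) (n : ℕ) :
    q ^ a * (q ^ 2) ^ n = q ^ (a + 2 * n) := by
  rw [zpow_add₀ hq, ← pow_mul]
  norm_cast

theorem qPoch_zpow_ne_zero (hq0 : 0 < q) (hq1 : q ≠ 1) {m : ℤ} {n : ℕ}
    (h : ∀ i < n, m + 2 * (i : ℤ) ≠ 0) : qPoch (q ^ m) (q ^ 2) n ≠ 0 :=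
  qPoch_ne_zero fun i hi => by
    rw [Ne, zpow_mul_sq_pow hq0.ne', zpow_eq_one_iff_right₀ hq0.le hq1]
    exact h i hi

theorem qPoch_sq_sq_ne_zero (hq0 : 0 < q) (hq1 : q ≠ 1) (n : ℕ) :
    qPoch (q ^ 2) (q ^ 2) n ≠ 0 :=
  qPoch_ne_zero fun i _ => by
    rw [Ne, ← pow_mul, ← pow_add, pow_eq_one_iff_of_nonneg hq0.le (by omega)]
    exact hq1

theorem qPoch_zpow_sub_mul (hq : q ≠ 0) {m m' : ℤ} (h : m + m' = 2) (k l : ℕ) :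
    qPoch (q ^ (m - 2 * l)) (q ^ 2) k * qPoch (q ^ (m' - 2 * k)) (q ^ 2) l *
        q ^ (2 * (k : ℤ) * l) =
      qPoch (q ^ m) (q ^ 2) k * qPoch (q ^ m') (q ^ 2) l := by
  have hc : q ^ 2 ≠ 0 := pow_ne_zero 2 hq
  have zpow_eq_sq : ∀ e : ℤ, e = 2 → q ^ e = q ^ 2 := by
    rintro e rfl
    norm_cast
  have hadd : qPoch (q ^ (m - 2 * l)) (q ^ 2) k * qPoch (q ^ (m - 2 * l + 2 * k)) (q ^ 2) l =
      qPoch (q ^ (m - 2 * l)) (q ^ 2) l * qPoch (q ^ m) (q ^ 2) k := by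
    rw [← zpow_mul_sq_pow hq, ← qPoch_add, add_comm, qPoch_add, zpow_mul_sq_pow hq,
      sub_add_cancel]
  have hpow : (-q ^ (m' - 2 * k)) ^ l * q ^ (2 * (k : ℤ) * l) = (-q ^ m') ^ l := by
    rw [zpow_mul, zpow_natCast, ← mul_pow, neg_mul, ← zpow_add₀ hq, sub_add_cancel]
  rw [qPoch_reflect hc (a := q ^ (m' - 2 * k)) (b := q ^ (m - 2 * l + 2 * k))
      (by rw [← zpow_add₀ hq, zpow_mul_sq_pow hq, zpow_eq_sq]; linarith),
    qPoch_reflect hc (a := q ^ m') (b := q ^ (m - 2 * l))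
      (by rw [← zpow_add₀ hq, zpow_mul_sq_pow hq, zpow_eq_sq]; linarith)]
  calc _ = qPoch (q ^ (m - 2 * l)) (q ^ 2) k * qPoch (q ^ (m - 2 * l + 2 * k)) (q ^ 2) l *
        ((-q ^ (m' - 2 * k)) ^ l * q ^ (2 * (k : ℤ) * l)) * (q ^ 2) ^ l.choose 2 := by ring
    _ = _ := by rw [hadd, hpow]; ring

theorem qPoch_zpow_two_sub_mul (hq : q ≠ 0) {k l : ℕ} (hl : l < k) :
    qPoch (q ^ (2 - 2 * (k : ℤ))) (q ^ 2) l * qPoch (q ^ 2) (q ^ 2) (k - l - 1) *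
        q ^ (2 * (k : ℤ) * l) =
      (-1) ^ l * q ^ (l * (l + 1)) * qPoch (q ^ 2) (q ^ 2) (k - 1) := by
  obtain ⟨j, rfl⟩ := Nat.exists_eq_add_of_lt hl
  have hc : q ^ 2 ≠ 0 := pow_ne_zero 2 hq
  have hexp : l * (l + 1) + 2 * (j + 1) * l + 2 * l.choose 2 = 2 * (l + j + 1) * l := by
    qify
    rw [Nat.cast_choose_two]
    ring
  have hbase : q ^ 2 * (q ^ 2) ^ j = q ^ ((2 : ℤ) + 2 * j) := by
    rw [← zpow_mul_sq_pow hq, zpow_ofNat]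
  have hreflect : q ^ 2 * (q ^ 2) ^ j * q ^ (2 - 2 * ((l + j + 1 : ℕ) : ℤ)) * (q ^ 2) ^ l =
      q ^ 2 := by
    rw [hbase, ← zpow_add₀ hq, zpow_mul_sq_pow hq, ← zpow_ofNat]
    congr 1
    push_cast
    ring
  rw [show l + j + 1 - l - 1 = j by omega, show l + j + 1 - 1 = j + l by omega, qPoch_add,
    qPoch_reflect hc hreflect,
    show 2 * ((l + j + 1 : ℕ) : ℤ) * l = ((2 * (l + j + 1) * l : ℕ) : ℤ) by push_cast; ring,
    zpow_natCast, ← hexp]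
  ring_nf
  rw [Even.neg_one_pow ⟨l, by ring⟩]
  ring

theorem hook_term_div_eq (hq0 : 0 < q) (hq1 : q ≠ 1) (N α : ℕ) {k l : ℕ} (hl : l < k) :
    (-1 : ℝ) ^ l * q ^ (l * (l + 1)) * qPoch (q ^ (2 * (N : ℤ) - 2 * (l : ℤ))) (q ^ 2) k *
          qPoch (q ^ (2 * (N : ℤ) + 2 * (α : ℤ) - 2 * (l : ℤ))) (q ^ 2) k /
        (qPoch (q ^ 2) (q ^ 2) l * qPoch (q ^ 2) (q ^ 2) (k - l - 1)) / (1 - q ^ (2 * k)) =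
      qPoch (q ^ (2 * N)) (q ^ 2) k * qPoch (q ^ (2 * N + 2 * α)) (q ^ 2) k /
          qPoch (q ^ 2) (q ^ 2) k *
        (q ^ (-(2 * (k : ℤ) * (l : ℤ))) * qPoch (q ^ (2 - 2 * (k : ℤ))) (q ^ 2) l *
            qPoch (q ^ (2 - 2 * (N : ℤ))) (q ^ 2) l *
            qPoch (q ^ (2 - 2 * (N : ℤ) - 2 * (α : ℤ))) (q ^ 2) l /
          (qPoch (q ^ 2) (q ^ 2) l * qPoch (q ^ (2 - 2 * (N : ℤ) - 2 * (k : ℤ))) (q ^ 2) l *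
            qPoch (q ^ (2 - 2 * (N : ℤ) - 2 * (α : ℤ) - 2 * (k : ℤ))) (q ^ 2) l)) := by
  have hq : q ≠ 0 := hq0.ne'
  have hN := qPoch_zpow_sub_mul hq (m := 2 * N) (m' := 2 - 2 * N) (by ring) k l
  have hNα := qPoch_zpow_sub_mul hq (m := 2 * N + 2 * α) (m' := 2 - 2 * N - 2 * α) (by ring) k l
  have hsign := qPoch_zpow_two_sub_mul hq hl
  have hlast : qPoch (q ^ 2) (q ^ 2) k = qPoch (q ^ 2) (q ^ 2) (k - 1) * (1 - q ^ (2 * k)) := by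
    obtain ⟨j, rfl⟩ := Nat.exists_eq_add_of_lt hl
    rw [Nat.add_sub_cancel, qPoch, qPoch, Finset.prod_range_succ, ← pow_succ', ← pow_mul]
  have hPN : qPoch (q ^ (2 * N)) (q ^ 2) k = qPoch (q ^ (2 * (N : ℤ))) (q ^ 2) k := by norm_cast
  have hPNα : qPoch (q ^ (2 * N + 2 * α)) (q ^ 2) k =
      qPoch (q ^ (2 * (N : ℤ) + 2 * α)) (q ^ 2) k := by norm_cast
  have hPl := qPoch_sq_sq_ne_zero hq0 hq1 l
  have hPkl := qPoch_sq_sq_ne_zero hq0 hq1 (k - l - 1)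
  have hPk := qPoch_sq_sq_ne_zero hq0 hq1 (k - 1)
  have h2k : (1 : ℝ) - q ^ (2 * k) ≠ 0 := by
    rw [sub_ne_zero, ne_comm, Ne, pow_eq_one_iff_of_nonneg hq0.le (by omega)]
    exact hq1
  have hPNk : qPoch (q ^ (2 - 2 * (N : ℤ) - 2 * (k : ℤ))) (q ^ 2) l ≠ 0 :=
    qPoch_zpow_ne_zero hq0 hq1 fun i hi => by omega
  have hPNαk : qPoch (q ^ (2 - 2 * (N : ℤ) - 2 * (α : ℤ) - 2 * (k : ℤ))) (q ^ 2) l ≠ 0 :=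
    qPoch_zpow_ne_zero hq0 hq1 fun i hi => by omega
  have hq2kl : q ^ (2 * (k : ℤ) * l) ≠ 0 := zpow_ne_zero _ hq
  rw [hPN, hPNα, hlast, zpow_neg,
    eq_div_of_mul_eq (mul_ne_zero hPNk hq2kl) ((mul_assoc _ _ _).symm.trans hN),
    eq_div_of_mul_eq (mul_ne_zero hPNαk hq2kl) ((mul_assoc _ _ _).symm.trans hNα),
    eq_div_of_mul_eq hPk hsign.symm]
  field_simp

end

theorem qLaguerre_moment_hook_sum_eq_basic_hypergeometric_general
    (q : ℝ) (hq0 : 0 < q) (hq1 : q < 1) (k N α : ℕ) :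
    (q ^ ((k : ℤ) * (2 - 2 * (N : ℤ) - (α : ℤ))) /
        ((N : ℝ) * (1 - q ^ 2) ^ k * (1 - q ^ (2 * k)))) *
      ∑ l ∈ Finset.range k,
        (-1 : ℝ) ^ l * q ^ (l * (l + 1)) *
            qPoch (q ^ (2 * (N : ℤ) - 2 * (l : ℤ))) (q ^ 2) k *
            qPoch (q ^ (2 * (N : ℤ) + 2 * (α : ℤ) - 2 * (l : ℤ))) (q ^ 2) k /
          (qPoch (q ^ 2) (q ^ 2) l * qPoch (q ^ 2) (q ^ 2) (k - l - 1)) =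
      Mlag q α k N := by
  rw [Mlag, ← div_div, div_mul_eq_mul_div, mul_div_assoc, Finset.sum_div, mul_assoc]
  congr 1
  rw [Finset.mul_sum]
  exact Finset.sum_congr rfl fun l hl => hook_term_div_eq hq0 hq1.ne N α (Finset.mem_range.mp hl)

/-- The Schur-function (hook partition) expansion of the k-th moment of the discrete
q-Laguerre ensemble equals its terminating ₃φ₂ representation. -/
theorem qLaguerre_moment_hook_sum_eq_basic_hypergeometric
    (q : ℝ) (hq0 : 0 < q) (hq1 : q < 1) (k N α : ℕ) (hk : 1 ≤ k) (hN : 1 ≤ N) :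
    (q ^ ((k : ℤ) * (2 - 2 * (N : ℤ) - (α : ℤ))) /
        ((N : ℝ) * (1 - q ^ 2) ^ k * (1 - q ^ (2 * k)))) *
      ∑ l ∈ Finset.range k,
        (-1 : ℝ) ^ l * q ^ (l * (l + 1)) *
            qPoch (q ^ (2 * (N : ℤ) - 2 * (l : ℤ))) (q ^ 2) k *
            qPoch (q ^ (2 * (N : ℤ) + 2 * (α : ℤ) - 2 * (l : ℤ))) (q ^ 2) k /
          (qPoch (q ^ 2) (q ^ 2) l * qPoch (q ^ 2) (q ^ 2) (k - l - 1)) =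
      Mlag q α k N :=
  qLaguerre_moment_hook_sum_eq_basic_hypergeometric_general q hq0 hq1 k N α
end

section
/- Let k ≥ 1 and α ≥ 0 be integers and let z be a real number with 0 < z < 1. Then ∑_{n=1}^{∞} Q_k(n;α)·n·(1-z)²·z^{n-1} = ((k+α)!/α!)·(1-z)^{k+1}·∑_{i=0}^{∞} (1+k)_i·(1+k+α)_i·z^i / ((1+α)_i·i!). In other words, the k-th LUE moment, when n-1 is chosen randomly according to a Negative Binomial distribution with parameters (2,z), equals this Gauss hypergeometric ₂F₁(1+k, 1+k+α; 1+α; z) expression. -/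
/-!
Put `u = z / (1 - z)` and `P(u) = ∑_{j ≤ k} q_j uʲ` with
`q_j = k(k-1)⋯(k-j+1) (1+k)_j / ((1+α)_j j!)`, i.e. `P(u) = ₂F₁(-k, 1+k; 1+α; -u)`.
Both sides of the identity equal `((k+α)!/α!) P(u)`.

On the hypergeometric side this is Pfaff's transformation
`₂F₁(1+k, 1+k+α; 1+α; z) = (1-z)^{-k-1} P(u)`: by Chu–Vandermonde the `i`-th coefficient of
the left side is `∑_j q_j C(i+k, k+j)`, and `∑_i C(i+k, k+j) zⁱ = zʲ / (1-z)^{k+j+1}`.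

On the LUE side the sum defining `Q_k(n+1; α)` terminates at `i < k`, and multiplying its Newton
expansion in the basis `C(n+1, i+1)` by `n+1+α` gives
`(n+1) Q_k(n+1; α) = ((k+α)!/α!) ∑_j q_j C(n+1, j+1)`; then
`∑_n C(n+1, j+1) zⁿ = zʲ / (1-z)^{j+2}`.
-/

/-- The rising Pochhammer symbol `(a)_i = a (a+1) ⋯ (a+i-1)`. -/
noncomputable def poch (a : ℝ) (i : ℕ) : ℝ := ∏ j ∈ Finset.range i, (a + j)

/-- The k-th moment of the n×n LUE normalised one-point function with parameter α
(hypergeometric representation of Cunden–Mezzadri–O'Connell–Simm). -/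
noncomputable def QLUE (k n α : ℕ) : ℝ :=
  ((n : ℝ) + α) * (Nat.factorial (k + α)) / (Nat.factorial (1 + α)) *
    ∑ i ∈ Finset.range n,
      poch (1 - (k : ℝ)) i * poch (2 + (k : ℝ)) i * poch (1 - (n : ℝ)) i /
        (poch 2 i * poch (2 + (α : ℝ)) i * (Nat.factorial i))

open Finset Polynomial
open scoped Nat

theorem poch_eq_eval_ascPochhammer (a : ℝ) (i : ℕ) :
    poch a i = (ascPochhammer ℝ i).eval a := by
  induction i with
  | zero => simp [poch]
  | succ i ih => rw [poch, prod_range_succ, ← poch, ih, ascPochhammer_succ_eval]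

theorem poch_succ (a : ℝ) (i : ℕ) : poch a (i + 1) = poch a i * (a + i) :=
  prod_range_succ _ _

theorem poch_succ' (a : ℝ) (i : ℕ) : poch a (i + 1) = a * poch (a + 1) i := by
  rw [poch, prod_range_succ', poch, mul_comm]
  simp [add_assoc, add_comm (1:ℝ)]

theorem poch_add (a : ℝ) (m n : ℕ) : poch a (m + n) = poch a m * poch (a + m) n := by
  simp only [poch, prod_range_add, Nat.cast_add, add_assoc]

theorem poch_pos {a : ℝ} (ha : 0 < a) (i : ℕ) : 0 < poch a i :=
  prod_pos fun j _ => by positivity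

theorem poch_neg_natCast (m i : ℕ) : poch (-m) i = (-1) ^ i * m.descFactorial i := by
  rw [poch_eq_eval_ascPochhammer, ascPochhammer_eval_neg_eq_descPochhammer,
    descPochhammer_eval_eq_descFactorial]

theorem poch_one_sub_natCast {k : ℕ} (hk : 1 ≤ k) (i : ℕ) :
    poch (1 - k) i = (-1) ^ i * (k - 1).descFactorial i := by
  rw [← poch_neg_natCast, Nat.cast_sub hk]
  ring_nf

theorem poch_one_add_natCast (m i : ℕ) : poch (1 + m) i = i ! * (m + i).choose i := by
  rw [poch_eq_eval_ascPochhammer, add_comm, ← Nat.cast_succ,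
    ascPochhammer_nat_eq_natCast_ascFactorial, Nat.ascFactorial_eq_factorial_mul_choose]
  push_cast; ring

theorem descPochhammer_int_smeval_eq_eval {R : Type*} [CommRing R] (i : ℕ) (r : R) :
    (descPochhammer ℤ i).smeval r = (descPochhammer R i).eval r := by
  rw [← aeval_eq_smeval, aeval_def, ← eval_map, descPochhammer_map]

theorem poch_eq_eval_descPochhammer (a : ℝ) (i : ℕ) :
    poch a i = (descPochhammer ℝ i).eval (a + i - 1) := by
  rw [descPochhammer_eval_eq_ascPochhammer, poch_eq_eval_ascPochhammer]
  ring_nf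

theorem poch_add_natCast_eq_sum (b : ℝ) (k i : ℕ) :
    poch (b + k) i =
      ∑ j ∈ range (i + 1), i.choose j * k.descFactorial j * poch (b + j) (i - j) := by
  have := Ring.descPochhammer_smeval_add (r := (k : ℝ)) (s := b + i - 1) i (Commute.all _ _)
  simp only [descPochhammer_int_smeval_eq_eval, descPochhammer_eval_eq_descFactorial] at this
  rw [poch_eq_eval_descPochhammer, show b + k + i - 1 = k + (b + i - 1) by ring, this,
    Nat.sum_antidiagonal_eq_sum_range_succ (fun j l => (i.choose j : ℝ) * (k.descFactorial j *
      (descPochhammer ℝ l).eval (b + i - 1)))]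
  refine sum_congr rfl fun j hj => ?_
  rw [poch_eq_eval_descPochhammer, Nat.cast_sub (by simpa [Nat.lt_succ_iff] using hj)]
  ring_nf

theorem sum_range_eq_of_forall_ge_eq_zero {M : Type*} [AddCommMonoid M] {u : ℕ → M} {m n : ℕ}
    (hm : ∀ j ≥ m, u j = 0) (hn : ∀ j ≥ n, u j = 0) :
    ∑ j ∈ range m, u j = ∑ j ∈ range n, u j :=
  (eventually_constant_sum hm (le_max_left m n)).symm.trans
    (eventually_constant_sum hn (le_max_right m n))

theorem choose_add_mul_choose_eq (i j k : ℕ) :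
    (k + j).choose j * (i + k).choose (k + j) = (i + k).choose k * i.choose j := by
  rw [← Nat.choose_symm_add, mul_comm, Nat.choose_mul (Nat.le_add_right k j)]
  simp

theorem natCast_add_mul_choose {R : Type*} [CommRing R] (a : R) (m j : ℕ) :
    ((m : R) + a) * m.choose j = (j + 1) * m.choose (j + 1) + (j + a) * m.choose j := by
  have h := congrArg (Nat.cast (R := R)) (Nat.choose_succ_right_eq m j)
  push_cast at h
  rcases le_or_gt j m with hjm | hmj
  · rw [Nat.cast_sub hjm] at h
    linear_combination -h
  · simp [Nat.choose_eq_zero_of_lt hmj, Nat.choose_eq_zero_of_lt (show m < j + 1 by omega)]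

theorem natCast_add_mul_sum_choose_succ {R : Type*} [CommRing R] {a : R} {E P : ℕ → R}
    {k : ℕ} (hE : E k = 0) (hP₀ : P 0 = (1 + a) * E 0)
    (hP : ∀ i < k, P (i + 1) = (i + 2) * E i + (i + 2 + a) * E (i + 1)) (m : ℕ) :
    ((m : R) + a) * ∑ i ∈ range k, E i * m.choose (i + 1) =
      ∑ j ∈ range (k + 1), P j * m.choose (j + 1) := by
  have hsplit : ((m : R) + a) * ∑ i ∈ range k, E i * m.choose (i + 1) =
      ∑ i ∈ range k, (i + 2) * E i * m.choose (i + 2) +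
        ∑ i ∈ range (k + 1), (i + 1 + a) * E i * m.choose (i + 1) := by
    rw [sum_range_succ, hE, mul_zero, zero_mul, add_zero, mul_sum, ← sum_add_distrib]
    refine sum_congr rfl fun i _ => ?_
    rw [mul_left_comm, natCast_add_mul_choose]
    push_cast; ring
  rw [hsplit, sum_range_succ' _ k, sum_range_succ', hP₀, ← add_assoc, ← sum_add_distrib]
  congr 1
  · refine sum_congr rfl fun i hi => ?_
    rw [hP i (mem_range.mp hi)]
    push_cast; ring
  · push_cast; ring

theorem hasSum_choose_add_mul_pow {𝕜 : Type*} [NormedField 𝕜] {z : 𝕜} (hz : ‖z‖ < 1)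
    (a d : ℕ) :
    HasSum (fun n : ℕ => ((n + a).choose (a + d) : 𝕜) * z ^ n)
      (z ^ d / (1 - z) ^ (a + d + 1)) := by
  rw [← hasSum_nat_add_iff' d]
  have hvanish : ∑ n ∈ range d, ((n + a).choose (a + d) : 𝕜) * z ^ n = 0 :=
    sum_eq_zero fun n hn => by
      rw [Nat.choose_eq_zero_of_lt (by simp at hn; omega), Nat.cast_zero, zero_mul]
  rw [hvanish, sub_zero, div_eq_mul_one_div]
  refine ((hasSum_choose_mul_geometric_of_norm_lt_one (a + d) hz).mul_left (z ^ d)).congr_fun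
    fun n => ?_
  rw [pow_add, show n + d + a = n + (a + d) by omega]
  ring

noncomputable def pfaffCoeff (k : ℕ) (α : ℝ) (j : ℕ) : ℝ :=
  k.descFactorial j * poch (1 + k) j / (poch (1 + α) j * j !)

theorem pfaffCoeff_mul_choose {α : ℝ} (hα : -1 < α) (k i j : ℕ) :
    pfaffCoeff k α j * (i + k).choose (k + j) * poch (1 + α) i =
      (i + k).choose k * (i.choose j * k.descFactorial j * poch (1 + α + j) (i - j)) := by
  rcases le_or_gt j i with hji | hij
  · have hsplit : poch (1 + α) i = poch (1 + α) j * poch (1 + α + j) (i - j) := by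
      rw [← poch_add, Nat.add_sub_cancel' hji]
    have hchoose :
        ((k + j).choose j : ℝ) * (i + k).choose (k + j) = (i + k).choose k * i.choose j :=
      mod_cast choose_add_mul_choose_eq i j k
    have hpos : 0 < poch (1 + α) j := poch_pos (by linarith) j
    rw [hsplit, pfaffCoeff, poch_one_add_natCast]
    field_simp
    linear_combination (k.descFactorial j * poch (1 + α + j) (i - j) : ℝ) * hchoose
  · simp [Nat.choose_eq_zero_of_lt hij,
      Nat.choose_eq_zero_of_lt (show i + k < k + j by omega)]

theorem hypergeometric_coeff_eq_sum {α : ℝ} (hα : -1 < α) (k i : ℕ) :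
    poch (1 + k) i * poch (1 + k + α) i / (poch (1 + α) i * i !) =
      ∑ j ∈ range (k + 1), pfaffCoeff k α j * (i + k).choose (k + j) := by
  have hpos : 0 < poch (1 + α) i := poch_pos (by linarith) i
  have hsum :
      (∑ j ∈ range (k + 1), pfaffCoeff k α j * (i + k).choose (k + j)) * poch (1 + α) i =
        (i + k).choose k * poch (1 + α + k) i := by
    rw [sum_mul, sum_congr rfl fun j _ => pfaffCoeff_mul_choose hα k i j, ← mul_sum,
      poch_add_natCast_eq_sum, sum_range_eq_of_forall_ge_eq_zero (n := i + 1)]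
    · intro j hj
      simp [Nat.descFactorial_eq_zero_iff_lt.mpr (show k < j by omega)]
    · intro j hj
      simp [Nat.choose_eq_zero_of_lt (show i < j by omega)]
  rw [eq_div_of_mul_eq hpos.ne' hsum, poch_one_add_natCast, add_right_comm, add_comm i k,
    ← Nat.choose_symm_add]
  field_simp

theorem hasSum_hypergeometric_pfaff {α : ℝ} (hα : -1 < α) (k : ℕ) {z : ℝ}
    (hz : ‖z‖ < 1) :
    HasSum (fun i : ℕ => poch (1 + k) i * poch (1 + k + α) i * z ^ i / (poch (1 + α) i * i !))
      ((∑ j ∈ range (k + 1), pfaffCoeff k α j * (z / (1 - z)) ^ j) / (1 - z) ^ (k + 1)) := by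
  have hz₁ : 1 - z ≠ 0 := sub_ne_zero.mpr fun h => by simp [← h] at hz
  have hvalue :
      (∑ j ∈ range (k + 1), pfaffCoeff k α j * (z / (1 - z)) ^ j) / (1 - z) ^ (k + 1) =
        ∑ j ∈ range (k + 1), pfaffCoeff k α j * (z ^ j / (1 - z) ^ (k + j + 1)) := by
    rw [sum_div]
    refine sum_congr rfl fun j _ => ?_
    rw [div_pow]
    field_simp
    ring
  rw [hvalue]
  have hseries := hasSum_sum fun j (_ : j ∈ range (k + 1)) =>
    (hasSum_choose_add_mul_pow hz k j).mul_left (pfaffCoeff k α j)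
  refine hseries.congr_fun fun i => ?_
  rw [mul_div_right_comm, hypergeometric_coeff_eq_sum hα, sum_mul]
  exact sum_congr rfl fun j _ => by ring

noncomputable def lueCoeff (k : ℕ) (α : ℝ) (i : ℕ) : ℝ :=
  (k - 1).descFactorial i * poch (2 + k) i / (i ! * poch (2 + α) i)

theorem lueCoeff_eq_zero_of_le {k : ℕ} (hk : 1 ≤ k) (α : ℝ) {i : ℕ} (hi : k ≤ i) :
    lueCoeff k α i = 0 := by
  simp [lueCoeff, Nat.descFactorial_eq_zero_iff_lt.mpr (show k - 1 < i by omega)]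

theorem lueCoeff_recurrence {k : ℕ} (hk : 1 ≤ k) {α : ℝ} (hα : -1 < α) {i : ℕ}
    (hi : i < k) :
    (1 + α) * pfaffCoeff k α (i + 1) =
      (i + 2) * lueCoeff k α i + (i + 2 + α) * lueCoeff k α (i + 1) := by
  obtain ⟨k, rfl⟩ : ∃ k', k = k' + 1 := ⟨k - 1, by omega⟩
  have hpos : 0 < poch (2 + α) i := poch_pos (by linarith) i
  have hα₁ : 0 < 1 + α := by linarith
  have hα₂ : 0 < 2 + α + i := by linarith [i.cast_nonneg (α := ℝ)]
  have hshift : ∀ b : ℝ, poch (1 + b) (i + 1) = (1 + b) * poch (2 + b) i := fun b => by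
    rw [poch_succ']; ring_nf
  rw [pfaffCoeff, lueCoeff, lueCoeff, Nat.add_sub_cancel, Nat.succ_descFactorial_succ,
    Nat.descFactorial_succ, hshift, hshift, poch_succ, poch_succ (2 + α), Nat.factorial_succ]
  push_cast [Nat.cast_sub (show i ≤ k by omega)]
  field_simp
  ring

theorem QLUE_summand_mul_eq {k : ℕ} (hk : 1 ≤ k) (α n i : ℕ) :
    poch (1 - k) i * poch (2 + k) i * poch (1 - (n + 1 : ℕ)) i /
        (poch 2 i * poch (2 + α) i * i !) * (n + 1) =
      lueCoeff k α i * (n + 1).choose (i + 1) := by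
  have hneg : poch (1 - (n + 1 : ℕ)) i = (-1) ^ i * (i ! * n.choose i) := by
    rw [show (1 : ℝ) - (n + 1 : ℕ) = -n by push_cast; ring, poch_neg_natCast,
      Nat.descFactorial_eq_factorial_mul_choose, Nat.cast_mul]
  have htwo : poch 2 i = (i + 1) * i ! := by
    rw [show (2 : ℝ) = 1 + (1 : ℕ) by norm_num, poch_one_add_natCast, add_comm 1 i,
      Nat.choose_succ_self_right]
    push_cast; ring
  have hsucc : ((n : ℝ) + 1) * n.choose i = (n + 1).choose (i + 1) * (i + 1) :=
    mod_cast Nat.add_one_mul_choose_eq n i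
  have hsign : ((-1 : ℝ) ^ i) ^ 2 = 1 := by rw [← pow_mul, mul_comm, pow_mul]; norm_num
  have hpos : 0 < poch (2 + α) i := poch_pos (by positivity) i
  rw [poch_one_sub_natCast hk, hneg, htwo, lueCoeff]
  field_simp
  rw [hsign]
  linear_combination ((k - 1).descFactorial i * poch (2 + k) i : ℝ) * hsucc

theorem QLUE_succ_mul {k : ℕ} (hk : 1 ≤ k) (α n : ℕ) :
    QLUE k (n + 1) α * (n + 1) = (k + α)! / (1 + α)! * ((n + 1 : ℕ) + α) *
      ∑ i ∈ range k, lueCoeff k α i * (n + 1).choose (i + 1) := by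
  rw [QLUE, mul_assoc, sum_mul, sum_congr rfl fun i _ => QLUE_summand_mul_eq hk α n i,
    sum_range_eq_of_forall_ge_eq_zero (n := k)]
  · ring
  · intro i hi
    rw [Nat.choose_eq_zero_of_lt (by omega), Nat.cast_zero, mul_zero]
  · intro i hi
    rw [lueCoeff_eq_zero_of_le hk _ hi, zero_mul]

theorem QLUE_succ_mul_eq_sum {k : ℕ} (hk : 1 ≤ k) (α n : ℕ) :
    QLUE k (n + 1) α * (n + 1) =
      (k + α)! / α ! * ∑ j ∈ range (k + 1), pfaffCoeff k α j * (n + 1).choose (j + 1) := by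
  have h₀ : (1 + α : ℝ) * pfaffCoeff k α 0 = (1 + α) * lueCoeff k α 0 := by
    simp [pfaffCoeff, lueCoeff, poch]
  have hα : -1 < (α : ℝ) := neg_one_lt_zero.trans_le α.cast_nonneg
  rw [QLUE_succ_mul hk, mul_assoc,
    natCast_add_mul_sum_choose_succ (P := fun j => (1 + α) * pfaffCoeff k α j)
      (lueCoeff_eq_zero_of_le hk α le_rfl) h₀ fun i hi => lueCoeff_recurrence hk hα hi,
    add_comm 1 α, Nat.factorial_succ]
  simp only [mul_assoc, ← mul_sum]
  push_cast
  field_simp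
  ring

theorem hasSum_QLUE {k : ℕ} (hk : 1 ≤ k) (α : ℕ) {z : ℝ} (hz : ‖z‖ < 1) :
    HasSum (fun n : ℕ => QLUE k (n + 1) α * (n + 1) * (1 - z) ^ 2 * z ^ n)
      ((k + α)! / α ! * ∑ j ∈ range (k + 1), pfaffCoeff k α j * (z / (1 - z)) ^ j) := by
  have hz₁ : 1 - z ≠ 0 := sub_ne_zero.mpr fun h => by simp [← h] at hz
  have hseries := hasSum_sum fun j (_ : j ∈ range (k + 1)) =>
    ((hasSum_choose_add_mul_pow hz 1 j).mul_left ((1 - z) ^ 2 * pfaffCoeff k α j))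
  have hvalue : ∑ j ∈ range (k + 1), pfaffCoeff k α j * (z / (1 - z)) ^ j =
      ∑ j ∈ range (k + 1), (1 - z) ^ 2 * pfaffCoeff k α j * (z ^ j / (1 - z) ^ (1 + j + 1)) :=
    sum_congr rfl fun j _ => by
      rw [div_pow]
      field_simp
      ring
  rw [hvalue]
  refine (hseries.mul_left ((k + α)! / α ! : ℝ)).congr_fun fun n => ?_
  rw [QLUE_succ_mul_eq_sum hk]
  simp only [mul_sum, sum_mul]
  refine sum_congr rfl fun j _ => ?_
  rw [add_comm 1 j]
  ring

/-- The k-th LUE moment, with `n-1` chosen according to a Negative Binomial distribution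
with parameters `(2,z)`, equals a Gauss hypergeometric `₂F₁(1+k, 1+k+α; 1+α; z)` expression. -/
theorem LUE_randomised_moment (k α : ℕ) (hk : 1 ≤ k) (z : ℝ) (hz0 : 0 < z) (hz1 : z < 1) :
    HasSum (fun n : ℕ => QLUE k (n + 1) α * ((n : ℝ) + 1) * (1 - z) ^ 2 * z ^ n)
      ((Nat.factorial (k + α) / Nat.factorial α) * (1 - z) ^ (k + 1) *
        ∑' i : ℕ,
          poch (1 + (k : ℝ)) i * poch (1 + (k : ℝ) + α) i * z ^ i /
            (poch (1 + (α : ℝ)) i * (Nat.factorial i))) := by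
  have hz : ‖z‖ < 1 := by rw [Real.norm_eq_abs, abs_lt]; constructor <;> linarith
  have hα : -1 < (α : ℝ) := neg_one_lt_zero.trans_le α.cast_nonneg
  rw [(hasSum_hypergeometric_pfaff hα k hz).tsum_eq, mul_assoc,
    mul_div_cancel₀ _ (pow_ne_zero _ (sub_ne_zero.mpr hz1.ne'))]
  exact hasSum_QLUE hk α hz
end
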